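/- Let N ≥ 2 and let 𝔸 be an N×N real matrix with 𝔸_{ij} ≤ 0 for all i ≠ j and zero row sums, ∑_{j=1}^N 𝔸_{ij} = 0 for all i. Let m_i > 0, let Δt > 0 satisfy Δt 𝔸_{ii} ≤ m_i for every i, and let r_{ij} (i ≠ j) be arbitrary real fluxes. Given u ∈ ℝ^N, define the low-order predictor ũ_i = u_i - (Δt/m_i)(𝔸u)_i and the flux-corrected update u^{new}_i = ũ_i + (Δt/m_i) ∑_{j≠i} α_{ij} r_{ij}, where the α_{ij} are produced by Zalesak's limiter applied with data (r_{ij}, m_i, Δt, ũ). Then the full explicit FCT step preserves the global bounds of u: min_{1≤j≤N} u_j ≤ u^{new}_i ≤ max_{1≤j≤N} u_j for every i. -/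

import Mathlib

noncomputable section

/-- For `N ≥ 2`, the set of indices different from `i` is nonempty. -/
lemma eraseUnivNonempty {N : ℕ} (hN : 2 ≤ N) (i : Fin N) :
    ((Finset.univ : Finset (Fin N)).erase i).Nonempty := by
  rw [← Finset.card_pos, Finset.card_erase_of_mem (Finset.mem_univ i), Finset.card_univ,
    Fintype.card_fin]
  omega

/-- For `N ≥ 1`, `Fin N` is nonempty as a finset. -/
lemma univNonempty {N : ℕ} (hN : 1 ≤ N) :
    (Finset.univ : Finset (Fin N)).Nonempty := by
  rw [← Finset.card_pos, Finset.card_univ, Fintype.card_fin]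
  omega

/-- `P_i^+ = ∑_{j ≠ i} max{r_{ij}, 0}`. -/
def Pp {N : ℕ} (r : Fin N → Fin N → ℝ) (i : Fin N) : ℝ :=
  ∑ j ∈ Finset.univ.erase i, max (r i j) 0

/-- `P_i^- = ∑_{j ≠ i} min{r_{ij}, 0}`. -/
def Pm {N : ℕ} (r : Fin N → Fin N → ℝ) (i : Fin N) : ℝ :=
  ∑ j ∈ Finset.univ.erase i, min (r i j) 0

/-- `Q_i^+ = max{0, max_{j ≠ i} (utilde_j - utilde_i)}`. -/
def Qp {N : ℕ} (hN : 2 ≤ N) (u : Fin N → ℝ) (i : Fin N) : ℝ :=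
  max 0 ((Finset.univ.erase i).sup' (eraseUnivNonempty hN i) fun j => u j - u i)

/-- `Q_i^- = min{0, min_{j ≠ i} (utilde_j - utilde_i)}`. -/
def Qm {N : ℕ} (hN : 2 ≤ N) (u : Fin N → ℝ) (i : Fin N) : ℝ :=
  min 0 ((Finset.univ.erase i).inf' (eraseUnivNonempty hN i) fun j => u j - u i)

/-- `R_i^+ = min{1, m_i Q_i^+ / (Δt P_i^+)}`, with `R_i^+ = 1` if `P_i^+ = 0`. -/
def Rp {N : ℕ} (hN : 2 ≤ N) (r : Fin N → Fin N → ℝ) (m : Fin N → ℝ) (Δt : ℝ)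
    (u : Fin N → ℝ) (i : Fin N) : ℝ :=
  if Pp r i = 0 then 1 else min 1 (m i * Qp hN u i / (Δt * Pp r i))

/-- `R_i^- = min{1, m_i Q_i^- / (Δt P_i^-)}`, with `R_i^- = 1` if `P_i^- = 0`. -/
def Rm {N : ℕ} (hN : 2 ≤ N) (r : Fin N → Fin N → ℝ) (m : Fin N → ℝ) (Δt : ℝ)
    (u : Fin N → ℝ) (i : Fin N) : ℝ :=
  if Pm r i = 0 then 1 else min 1 (m i * Qm hN u i / (Δt * Pm r i))

/-- Zalesak's correction factors. -/
def zalesakAlpha {N : ℕ} (hN : 2 ≤ N) (r : Fin N → Fin N → ℝ) (m : Fin N → ℝ)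
    (Δt : ℝ) (u : Fin N → ℝ) (i j : Fin N) : ℝ :=
  if 0 < r i j then min (Rp hN r m Δt u i) (Rm hN r m Δt u j)
  else min (Rm hN r m Δt u i) (Rp hN r m Δt u j)

/-!
The low-order predictor is `ũ = (1 - Δt M⁻¹ 𝔸) u` with `M = diag m`. By the sign condition and the
CFL condition the rows of `1 - Δt M⁻¹ 𝔸` are nonnegative, and by the zero row sums they add up to
one, so each `ũᵢ` is a convex combination of the `uⱼ`. Zalesak's factors are chosen so that
`αᵢⱼ rᵢⱼ ≤ Rᵢ⁺ max{rᵢⱼ, 0}` and `αᵢⱼ rᵢⱼ ≥ Rᵢ⁻ min{rᵢⱼ, 0}`, which puts the limited correction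
`(Δt/mᵢ) ∑ⱼ αᵢⱼ rᵢⱼ` in `[Qᵢ⁻, Qᵢ⁺]`; and `ũᵢ + Qᵢ^±` are the extrema of `ũ`, hence within the
bounds of `u`.
-/

open Finset
open scoped Matrix

section RowStochastic

variable {ι κ : Type*} [Fintype κ]

lemma Matrix.mulVec_apply_le_sup' {M : Matrix ι κ ℝ} {i : ι} (hM : ∀ j, 0 ≤ M i j)
    (hrow : ∑ j, M i j = 1) (u : κ → ℝ) (hne : (univ : Finset κ).Nonempty) :
    (M *ᵥ u) i ≤ univ.sup' hne u := by
  have h := centerMass_le_sup (s := univ) (f := u) (fun j _ => hM j) (hrow ▸ one_pos)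
  rwa [centerMass_eq_of_sum_1 _ _ hrow] at h

lemma Matrix.inf'_le_mulVec_apply {M : Matrix ι κ ℝ} {i : ι} (hM : ∀ j, 0 ≤ M i j)
    (hrow : ∑ j, M i j = 1) (u : κ → ℝ) (hne : (univ : Finset κ).Nonempty) :
    univ.inf' hne u ≤ (M *ᵥ u) i := by
  have h := inf_le_centerMass (s := univ) (f := u) (fun j _ => hM j) (hrow ▸ one_pos)
  rwa [centerMass_eq_of_sum_1 _ _ hrow] at h

end RowStochastic

section LowOrder

variable {ι : Type*} [DecidableEq ι] {A : Matrix ι ι ℝ} {τ : ℝ} {i : ι}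

lemma one_sub_smul_apply_nonneg (hτ : 0 ≤ τ) (hoff : ∀ j, i ≠ j → A i j ≤ 0)
    (hdiag : τ * A i i ≤ 1) (j : ι) : 0 ≤ (1 - τ • A) i j := by
  rcases eq_or_ne i j with rfl | hij
  · simpa using hdiag
  · simpa [Matrix.one_apply_ne hij] using mul_nonpos_of_nonneg_of_nonpos hτ (hoff j hij)

variable [Fintype ι]

lemma sum_one_sub_smul_apply (hrow : ∑ j, A i j = 0) : ∑ j, (1 - τ • A) i j = 1 := by
  simp [Matrix.one_apply, sum_sub_distrib, ← mul_sum, hrow]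

lemma one_sub_smul_mulVec_apply (u : ι → ℝ) :
    ((1 - τ • A) *ᵥ u) i = u i - τ * ∑ j, A i j * u j := by
  simp only [Matrix.sub_mulVec, Matrix.one_mulVec, Matrix.smul_mulVec, Pi.sub_apply,
    Pi.smul_apply, smul_eq_mul]
  rfl

end LowOrder

section Zalesak

variable {N : ℕ} (hN : 2 ≤ N) (r : Fin N → Fin N → ℝ) {m : Fin N → ℝ} {Δt : ℝ}
  (u : Fin N → ℝ) (i : Fin N)

lemma Pp_nonneg : 0 ≤ Pp r i := sum_nonneg fun _ _ => le_max_right _ _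

lemma Pm_nonpos : Pm r i ≤ 0 := sum_nonpos fun _ _ => min_le_right _ _

lemma Qp_nonneg : 0 ≤ Qp hN u i := le_max_left _ _

lemma Qm_nonpos : Qm hN u i ≤ 0 := min_le_left _ _

lemma Rp_nonneg (hm : 0 ≤ m i) (hΔt : 0 ≤ Δt) : 0 ≤ Rp hN r m Δt u i := by
  unfold Rp
  split_ifs
  · exact zero_le_one
  · exact le_min zero_le_one <|
      div_nonneg (mul_nonneg hm (Qp_nonneg hN u i)) (mul_nonneg hΔt (Pp_nonneg r i))

lemma Rm_nonneg (hm : 0 ≤ m i) (hΔt : 0 ≤ Δt) : 0 ≤ Rm hN r m Δt u i := by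
  unfold Rm
  split_ifs
  · exact zero_le_one
  · exact le_min zero_le_one <| div_nonneg_of_nonpos
      (mul_nonpos_of_nonneg_of_nonpos hm (Qm_nonpos hN u i))
      (mul_nonpos_of_nonneg_of_nonpos hΔt (Pm_nonpos r i))

lemma Rp_mul_Pp_le (hm : 0 ≤ m i) (hΔt : 0 < Δt) :
    Δt * (Rp hN r m Δt u i * Pp r i) ≤ m i * Qp hN u i := by
  unfold Rp
  split_ifs with hP
  · simpa [hP] using mul_nonneg hm (Qp_nonneg hN u i)
  · have hP : 0 < Pp r i := (Pp_nonneg r i).lt_of_ne' hP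
    calc Δt * (min 1 (m i * Qp hN u i / (Δt * Pp r i)) * Pp r i)
        ≤ Δt * (m i * Qp hN u i / (Δt * Pp r i) * Pp r i) := by gcongr; exact min_le_right _ _
      _ = m i * Qp hN u i := by field_simp

lemma le_Rm_mul_Pm (hm : 0 ≤ m i) (hΔt : 0 < Δt) :
    m i * Qm hN u i ≤ Δt * (Rm hN r m Δt u i * Pm r i) := by
  unfold Rm
  split_ifs with hP
  · simpa [hP] using mul_nonpos_of_nonneg_of_nonpos hm (Qm_nonpos hN u i)
  · have hP : Pm r i < 0 := (Pm_nonpos r i).lt_of_ne hP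
    calc m i * Qm hN u i = Δt * (m i * Qm hN u i / (Δt * Pm r i) * Pm r i) := by field_simp
      _ ≤ Δt * (min 1 (m i * Qm hN u i / (Δt * Pm r i)) * Pm r i) :=
          mul_le_mul_of_nonneg_left (mul_le_mul_of_nonpos_right (min_le_right _ _) hP.le) hΔt.le

lemma zalesakAlpha_nonneg (hm : ∀ k, 0 ≤ m k) (hΔt : 0 ≤ Δt) (j : Fin N) :
    0 ≤ zalesakAlpha hN r m Δt u i j := by
  unfold zalesakAlpha
  split_ifs
  · exact le_min (Rp_nonneg hN r u i (hm i) hΔt) (Rm_nonneg hN r u j (hm j) hΔt)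
  · exact le_min (Rm_nonneg hN r u i (hm i) hΔt) (Rp_nonneg hN r u j (hm j) hΔt)

lemma zalesakAlpha_mul_le (hm : ∀ k, 0 ≤ m k) (hΔt : 0 ≤ Δt) (j : Fin N) :
    zalesakAlpha hN r m Δt u i j * r i j ≤ Rp hN r m Δt u i * max (r i j) 0 := by
  by_cases hr : 0 < r i j
  · rw [max_eq_left hr.le]
    gcongr
    rw [zalesakAlpha, if_pos hr]
    exact min_le_left _ _
  · rw [not_lt] at hr
    rw [max_eq_right hr, mul_zero]
    exact mul_nonpos_of_nonneg_of_nonpos (zalesakAlpha_nonneg hN r u i hm hΔt j) hr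

lemma Rm_mul_le_zalesakAlpha_mul (hm : ∀ k, 0 ≤ m k) (hΔt : 0 ≤ Δt) (j : Fin N) :
    Rm hN r m Δt u i * min (r i j) 0 ≤ zalesakAlpha hN r m Δt u i j * r i j := by
  by_cases hr : 0 < r i j
  · rw [min_eq_right hr.le, mul_zero]
    exact mul_nonneg (zalesakAlpha_nonneg hN r u i hm hΔt j) hr.le
  · rw [not_lt] at hr
    rw [min_eq_left hr]
    refine mul_le_mul_of_nonpos_right ?_ hr
    rw [zalesakAlpha, if_neg hr.not_gt]
    exact min_le_left _ _

lemma mul_sum_zalesakAlpha_mul_le (hm : ∀ k, 0 < m k) (hΔt : 0 < Δt) :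
    Δt / m i * ∑ j ∈ univ.erase i, zalesakAlpha hN r m Δt u i j * r i j ≤ Qp hN u i := by
  have hm' : ∀ k, 0 ≤ m k := fun k => (hm k).le
  have hsum : ∑ j ∈ univ.erase i, zalesakAlpha hN r m Δt u i j * r i j
      ≤ Rp hN r m Δt u i * Pp r i := by
    rw [Pp, mul_sum]
    exact sum_le_sum fun j _ => zalesakAlpha_mul_le hN r u i hm' hΔt.le j
  calc Δt / m i * ∑ j ∈ univ.erase i, zalesakAlpha hN r m Δt u i j * r i j
      ≤ Δt / m i * (Rp hN r m Δt u i * Pp r i) :=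
        mul_le_mul_of_nonneg_left hsum (div_pos hΔt (hm i)).le
    _ = Δt * (Rp hN r m Δt u i * Pp r i) / m i := by ring
    _ ≤ m i * Qp hN u i / m i :=
        div_le_div_of_nonneg_right (Rp_mul_Pp_le hN r u i (hm' i) hΔt) (hm' i)
    _ = Qp hN u i := by field_simp [(hm i).ne']

lemma Qm_le_mul_sum_zalesakAlpha_mul (hm : ∀ k, 0 < m k) (hΔt : 0 < Δt) :
    Qm hN u i ≤ Δt / m i * ∑ j ∈ univ.erase i, zalesakAlpha hN r m Δt u i j * r i j := by
  have hm' : ∀ k, 0 ≤ m k := fun k => (hm k).le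
  have hsum : Rm hN r m Δt u i * Pm r i
      ≤ ∑ j ∈ univ.erase i, zalesakAlpha hN r m Δt u i j * r i j := by
    rw [Pm, mul_sum]
    exact sum_le_sum fun j _ => Rm_mul_le_zalesakAlpha_mul hN r u i hm' hΔt.le j
  calc Qm hN u i = m i * Qm hN u i / m i := by field_simp [(hm i).ne']
    _ ≤ Δt * (Rm hN r m Δt u i * Pm r i) / m i :=
        div_le_div_of_nonneg_right (le_Rm_mul_Pm hN r u i (hm' i) hΔt) (hm' i)
    _ = Δt / m i * (Rm hN r m Δt u i * Pm r i) := by ring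
    _ ≤ Δt / m i * ∑ j ∈ univ.erase i, zalesakAlpha hN r m Δt u i j * r i j :=
        mul_le_mul_of_nonneg_left hsum (div_pos hΔt (hm i)).le

end Zalesak

section LocalBounds

variable {N : ℕ} (hN : 2 ≤ N) {u : Fin N → ℝ} (i : Fin N) {M : ℝ}

lemma add_Qp_le (h : ∀ j, u j ≤ M) : u i + Qp hN u i ≤ M := by
  have : Qp hN u i ≤ M - u i :=
    max_le (sub_nonneg.2 (h i)) (sup'_le _ _ fun j _ => sub_le_sub_right (h j) _)
  linarith

lemma le_add_Qm (h : ∀ j, M ≤ u j) : M ≤ u i + Qm hN u i := by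
  have : M - u i ≤ Qm hN u i :=
    le_min (sub_nonpos.2 (h i)) (le_inf' _ _ fun j _ => sub_le_sub_right (h j) _)
  linarith

end LocalBounds

/-- The full explicit FCT step (low-order predictor followed by Zalesak-limited
antidiffusive correction) preserves the global bounds of the data. -/
theorem explicit_fct_step_bound_preserving
    (N : ℕ) (hN : 2 ≤ N) (A : Matrix (Fin N) (Fin N) ℝ)
    (hoff : ∀ i j, i ≠ j → A i j ≤ 0)
    (hrow : ∀ i, ∑ j, A i j = 0)
    (m : Fin N → ℝ) (hm : ∀ i, 0 < m i)
    (Δt : ℝ) (hΔt : 0 < Δt)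
    (hcfl : ∀ i, Δt * A i i ≤ m i)
    (r : Fin N → Fin N → ℝ) (u utilde : Fin N → ℝ)
    (hutilde : ∀ i, utilde i = u i - Δt / m i * ∑ j, A i j * u j) :
    ∀ i,
      Finset.univ.inf' (univNonempty (by omega)) u ≤
        utilde i + Δt / m i * ∑ j ∈ Finset.univ.erase i, zalesakAlpha hN r m Δt utilde i j * r i j ∧
      utilde i + Δt / m i * ∑ j ∈ Finset.univ.erase i, zalesakAlpha hN r m Δt utilde i j * r i j ≤
        Finset.univ.sup' (univNonempty (by omega)) u := by
  intro i
  have hne : (univ : Finset (Fin N)).Nonempty := univNonempty (by omega)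
  have hpred : ∀ j, univ.inf' hne u ≤ utilde j ∧ utilde j ≤ univ.sup' hne u := by
    intro j
    have hdiag : Δt / m j * A j j ≤ 1 := by
      rw [div_mul_eq_mul_div, div_le_one (hm j)]
      exact hcfl j
    have hweight := one_sub_smul_apply_nonneg (div_pos hΔt (hm j)).le (hoff j) hdiag
    have hsum := sum_one_sub_smul_apply (τ := Δt / m j) (hrow j)
    rw [hutilde j, ← one_sub_smul_mulVec_apply]
    exact ⟨Matrix.inf'_le_mulVec_apply hweight hsum u hne,
      Matrix.mulVec_apply_le_sup' hweight hsum u hne⟩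
  have hlower := Qm_le_mul_sum_zalesakAlpha_mul hN r utilde i hm hΔt
  have hupper := mul_sum_zalesakAlpha_mul_le hN r utilde i hm hΔt
  exact ⟨(le_add_Qm hN i fun j => (hpred j).1).trans (by linarith),
    (by linarith : _ ≤ utilde i + Qp hN utilde i).trans (add_Qp_le hN i fun j => (hpred j).2)⟩
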